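/- For any x ∈ (1/2)L ∖ L, one has f(x) = 0, where f(x) = Σ_{ω∈L} exp(-π|ω+x|²/a(L))/(ω+x) − Σ_{ω∈L∖{0}} exp(-π|ω|²/a(L) + 2πi E_L(ω,x))/ω. -/
import Mathlib


open scoped Real Topology
open Complex MeasureTheory Filter ComplexConjugate

noncomputable section

/-- The lattice point `m·ω₁ + n·ω₂` indexed by `p = (m, n) : ℤ × ℤ`. -/
def lat (ω₁ ω₂ : ℂ) (p : ℤ × ℤ) : ℂ := (p.1 : ℂ) * ω₁ + (p.2 : ℂ) * ω₂

/-- Membership in the lattice `L = ℤω₁ + ℤω₂`. -/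
def inLat (ω₁ ω₂ : ℂ) (x : ℂ) : Prop := ∃ p : ℤ × ℤ, x = lat ω₁ ω₂ p

/-- The covolume `a(L) = Im(conj ω₁ · ω₂)`. -/
def covol (ω₁ ω₂ : ℂ) : ℝ := (conj ω₁ * ω₂).im

/-- The symplectic form `E_L(x,y) = Im(conj x · y)/a(L)`. -/
def Esymp (ω₁ ω₂ : ℂ) (x y : ℂ) : ℝ := (conj x * y).im / covol ω₁ ω₂

/-- The function `f(x)` from the main theorem:
`Σ_{ω∈L} exp(-π|ω+x|²/a)/(ω+x) − Σ_{ω∈L∖0} exp(-π|ω|²/a + 2πi E(ω,x))/ω`. -/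
def zf (ω₁ ω₂ : ℂ) (x : ℂ) : ℂ :=
  (∑' p : ℤ × ℤ,
    Complex.exp (-(Real.pi * Complex.normSq (lat ω₁ ω₂ p + x) / covol ω₁ ω₂ : ℝ))
      / (lat ω₁ ω₂ p + x))
  - ∑' p : {p : ℤ × ℤ // p ≠ (0, 0)},
      Complex.exp ((-(Real.pi * Complex.normSq (lat ω₁ ω₂ p.1) / covol ω₁ ω₂ : ℝ) : ℂ)
          + 2 * (Real.pi : ℂ) * I * (Esymp ω₁ ω₂ (lat ω₁ ω₂ p.1) x : ℝ))
        / lat ω₁ ω₂ p.1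

lemma lat_im (ω₁ ω₂ : ℂ) (p q : ℤ × ℤ) :
    (conj (lat ω₁ ω₂ p) * lat ω₁ ω₂ q).im
      = ((p.1 * q.2 - p.2 * q.1 : ℤ) : ℝ) * covol ω₁ ω₂ := by
  simp only [lat, covol, map_add, map_mul, map_intCast]
  simp only [Complex.add_im, Complex.add_re, Complex.mul_im, Complex.mul_re,
    Complex.intCast_re, Complex.intCast_im, Complex.conj_re, Complex.conj_im]
  push_cast
  ring

lemma lat_neg (ω₁ ω₂ : ℂ) (p : ℤ × ℤ) : lat ω₁ ω₂ (-p) = -lat ω₁ ω₂ p := by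
  simp [lat]; push_cast; ring

lemma lat_sub (ω₁ ω₂ : ℂ) (p q : ℤ × ℤ) :
    lat ω₁ ω₂ (p - q) = lat ω₁ ω₂ p - lat ω₁ ω₂ q := by
  simp only [lat, Prod.fst_sub, Prod.snd_sub]; push_cast; ring

/-- `f` vanishes at half-lattice points not in `L`. -/
theorem stmt6 (ω₁ ω₂ : ℂ) (h : 0 < covol ω₁ ω₂) (x : ℂ)
    (hhalf : ∃ p : ℤ × ℤ, x = lat ω₁ ω₂ p / 2) (hx : ¬ inLat ω₁ ω₂ x) :
    zf ω₁ ω₂ x = 0 := by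
  obtain ⟨q, hq⟩ := hhalf
  have h2x : lat ω₁ ω₂ q = 2 * x := by rw [hq]; ring
  have hc : covol ω₁ ω₂ ≠ 0 := ne_of_gt h
  -- First sum vanishes
  set F : ℤ × ℤ → ℂ := fun p =>
    Complex.exp (-(Real.pi * Complex.normSq (lat ω₁ ω₂ p + x) / covol ω₁ ω₂ : ℝ))
      / (lat ω₁ ω₂ p + x) with hF
  have hinv : Function.Involutive (fun p : ℤ × ℤ => -q - p) := by
    intro p; ring
  let e : Equiv.Perm (ℤ × ℤ) := hinv.toPerm _
  have he : ∀ p, e p = -q - p := fun _ => rfl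
  have key1 : ∀ p : ℤ × ℤ, F (e p) = -F p := by
    intro p
    have hl : lat ω₁ ω₂ (-q - p) + x = -(lat ω₁ ω₂ p + x) := by
      rw [show (-q - p : ℤ × ℤ) = (-q) - p from rfl, lat_sub, lat_neg, h2x]; ring
    rw [he, hF]
    simp only [hl, Complex.normSq_neg]
    rw [div_neg]
  have hS1 : (∑' p : ℤ × ℤ, F p) = 0 := by
    have h1 : (∑' p : ℤ × ℤ, F p) = ∑' p : ℤ × ℤ, F (e p) := (e.tsum_eq F).symm
    have h2 : (∑' p : ℤ × ℤ, F (e p)) = -∑' p : ℤ × ℤ, F p := by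
      rw [tsum_congr key1, tsum_neg]
    have h3 : (∑' p : ℤ × ℤ, F p) = -∑' p : ℤ × ℤ, F p := h1.trans h2
    linear_combination h3 / 2
  -- Second sum vanishes
  set G : {p : ℤ × ℤ // p ≠ (0, 0)} → ℂ := fun p =>
    Complex.exp ((-(Real.pi * Complex.normSq (lat ω₁ ω₂ p.1) / covol ω₁ ω₂ : ℝ) : ℂ)
        + 2 * (Real.pi : ℂ) * I * (Esymp ω₁ ω₂ (lat ω₁ ω₂ p.1) x : ℝ))
      / lat ω₁ ω₂ p.1 with hG
  have hne : ∀ p : ℤ × ℤ, p ≠ (0, 0) ↔ -p ≠ (0, 0) := by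
    intro p
    constructor
    · intro hp hc'; apply hp
      have : p = -(-p) := by ring
      rw [this, hc']; rfl
    · intro hp hc'; apply hp; rw [hc']; rfl
  let e2 : {p : ℤ × ℤ // p ≠ (0, 0)} ≃ {p : ℤ × ℤ // p ≠ (0, 0)} :=
    (Equiv.neg (ℤ × ℤ)).subtypeEquiv hne
  have key2 : ∀ p : {p : ℤ × ℤ // p ≠ (0, 0)}, G (e2 p) = -G p := by
    rintro ⟨p, hp⟩
    have he2 : (e2 ⟨p, hp⟩ : ℤ × ℤ) = -p := rfl
    -- 2·E(lat p, x) is an integer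
    have hE2 : (2 : ℝ) * Esymp ω₁ ω₂ (lat ω₁ ω₂ p) x
        = ((p.1 * q.2 - p.2 * q.1 : ℤ) : ℝ) := by
      have him : (conj (lat ω₁ ω₂ p) * (2 * x)).im
          = 2 * (conj (lat ω₁ ω₂ p) * x).im := by
        rw [show conj (lat ω₁ ω₂ p) * (2 * x) = 2 * (conj (lat ω₁ ω₂ p) * x) from by ring]
        simp
      have h' := lat_im ω₁ ω₂ p q
      rw [h2x, him] at h'
      rw [Esymp, ← mul_div_assoc, h', mul_div_assoc, div_self hc, mul_one]
    have hEneg : Esymp ω₁ ω₂ (lat ω₁ ω₂ (-p)) x = -(Esymp ω₁ ω₂ (lat ω₁ ω₂ p) x) := by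
      rw [lat_neg, Esymp, Esymp, map_neg]
      simp only [Complex.neg_im, neg_mul, Complex.mul_im, Complex.neg_re]
      ring
    have hexp : Complex.exp
          ((-(Real.pi * Complex.normSq (lat ω₁ ω₂ p) / covol ω₁ ω₂ : ℝ) : ℂ)
          + 2 * (Real.pi : ℂ) * I * ((-(Esymp ω₁ ω₂ (lat ω₁ ω₂ p) x) : ℝ) : ℂ))
        = Complex.exp ((-(Real.pi * Complex.normSq (lat ω₁ ω₂ p) / covol ω₁ ω₂ : ℝ) : ℂ)
          + 2 * (Real.pi : ℂ) * I * ((Esymp ω₁ ω₂ (lat ω₁ ω₂ p) x : ℝ) : ℂ)) := by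
      have hn : ((p.1 * q.2 - p.2 * q.1 : ℤ) : ℂ)
          = 2 * ((Esymp ω₁ ω₂ (lat ω₁ ω₂ p) x : ℝ) : ℂ) := by
        rw [show ((p.1 * q.2 - p.2 * q.1 : ℤ) : ℂ)
            = (((p.1 * q.2 - p.2 * q.1 : ℤ) : ℝ) : ℂ) from by push_cast; ring,
          ← hE2]
        push_cast; ring
      have harg : (-(Real.pi * Complex.normSq (lat ω₁ ω₂ p) / covol ω₁ ω₂ : ℝ) : ℂ)
          + 2 * (Real.pi : ℂ) * I * ((-(Esymp ω₁ ω₂ (lat ω₁ ω₂ p) x) : ℝ) : ℂ)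
          = ((-(Real.pi * Complex.normSq (lat ω₁ ω₂ p) / covol ω₁ ω₂ : ℝ) : ℂ)
          + 2 * (Real.pi : ℂ) * I * ((Esymp ω₁ ω₂ (lat ω₁ ω₂ p) x : ℝ) : ℂ))
          - ((p.1 * q.2 - p.2 * q.1 : ℤ) : ℂ) * (2 * (Real.pi : ℂ) * I) := by
        rw [hn, Complex.ofReal_neg]; ring
      rw [harg, Complex.exp_sub, Complex.exp_int_mul_two_pi_mul_I, div_one]
    rw [hG]
    simp only [he2]
    rw [hEneg, lat_neg, Complex.normSq_neg, hexp, div_neg]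
  have hS2 : (∑' p : {p : ℤ × ℤ // p ≠ (0, 0)}, G p) = 0 := by
    have h1 : (∑' p, G p) = ∑' p, G (e2 p) := (e2.tsum_eq G).symm
    have h2 : (∑' p, G (e2 p)) = -∑' p, G p := by
      rw [tsum_congr key2, tsum_neg]
    have h3 : (∑' p, G p) = -∑' p, G p := h1.trans h2
    linear_combination h3 / 2
  rw [zf]
  rw [show (∑' p : ℤ × ℤ,
      Complex.exp (-(Real.pi * Complex.normSq (lat ω₁ ω₂ p + x) / covol ω₁ ω₂ : ℝ))
        / (lat ω₁ ω₂ p + x)) = ∑' p, F p from rfl, hS1]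
  rw [show (∑' p : {p : ℤ × ℤ // p ≠ (0, 0)},
      Complex.exp ((-(Real.pi * Complex.normSq (lat ω₁ ω₂ p.1) / covol ω₁ ω₂ : ℝ) : ℂ)
          + 2 * (Real.pi : ℂ) * I * (Esymp ω₁ ω₂ (lat ω₁ ω₂ p.1) x : ℝ))
        / lat ω₁ ω₂ p.1) = ∑' p, G p from rfl, hS2]
  ring
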